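/- arXiv:1003.2927 — 8 statements merged into one kernel-verified Lean document; each statement's English description precedes it below -/
import Mathlib

section
/- Let A be an integral domain of characteristic 0 and let h(z) = 1 + 2a_1 z/1! + 2a_2 z^2/2! + 2a_3 z^3/3! + ... be a formal power series with all a_j ∈ A. Then the unique formal power series φ(z) with constant term 1 satisfying φ(z)^2 = h(z) is Hurwitz integral over A, i.e., every coefficient of φ is of the form c_n/n! with c_n ∈ A. -/
/-!
Write `φ = ∑ dₙ zⁿ/n!`. Comparing coefficients of `zⁿ/n!` in `φ² = h` gives, for `n ≥ 1`,
`2 dₙ + ∑_{0<i<n} (n choose i) dᵢ dₙ₋ᵢ = 2 aₙ`. The middle sum is even: its terms pair up under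
`i ↦ n - i`, and the unpaired term at `i = n/2` carries the even central binomial coefficient.
So if `d₀, …, dₙ₋₁ ∈ A` then `dₙ ∈ A`, since `2` is cancellable in the fraction field.
-/

open Finset PowerSeries

theorem PowerSeries.factorial_mul_coeff_mul {R : Type*} [CommSemiring R] (φ ψ : R⟦X⟧) (n : ℕ) :
    (n.factorial : R) * coeff n (φ * ψ) = ∑ i ∈ range (n + 1),
      (n.choose i : R) * (i.factorial * coeff i φ) * ((n - i).factorial * coeff (n - i) ψ) := by
  rw [coeff_mul, Nat.sum_antidiagonal_eq_sum_range_succ_mk, mul_sum]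
  refine sum_congr rfl fun i hi => ?_
  have hfac : (n.factorial : R) = n.choose i * i.factorial * (n - i).factorial := by
    rw [← Nat.cast_mul, ← Nat.cast_mul,
      Nat.choose_mul_factorial_mul_factorial (mem_range_succ_iff.mp hi)]
  rw [hfac]
  ring

theorem two_dvd_sum_Ico_choose_mul_mul {A : Type*} [CommRing A] (n : ℕ) (c : ℕ → A) :
    2 ∣ ∑ i ∈ Ico 1 n, (n.choose i : A) * c i * c (n - i) := by
  let π := Ideal.Quotient.mk (Ideal.span {(2 : A)})
  have hπ2 : π 2 = 0 := Ideal.Quotient.eq_zero_iff_mem.mpr (Ideal.mem_span_singleton_self 2)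
  rw [← Ideal.mem_span_singleton, ← Ideal.Quotient.eq_zero_iff_mem, map_sum]
  refine sum_involution (fun i _ => n - i) (fun i hi => ?paired) (fun i hi hne hfix => ?central)
    (fun i hi => by simp only [mem_Ico] at hi ⊢; omega)
    (fun i hi => by simp only [mem_Ico] at hi; omega)
  case paired =>
    have hin : i ≤ n := (mem_Ico.mp hi).2.le
    rw [Nat.sub_sub_self hin, Nat.choose_symm hin, ← map_add,
      show (n.choose i : A) * c i * c (n - i) + n.choose i * c (n - i) * c i
        = 2 * (n.choose i * c i * c (n - i)) by ring, map_mul, hπ2, zero_mul]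
  case central =>
    obtain rfl : n = 2 * i := by simp only [mem_Ico] at hi; omega
    obtain ⟨k, hk⟩ := Nat.two_dvd_centralBinom_of_one_le (mem_Ico.mp hi).1
    apply hne
    rw [← Nat.centralBinom_eq_two_mul_choose, hk, Nat.cast_mul, Nat.cast_ofNat, map_mul, map_mul,
      map_mul, hπ2]
    ring

theorem mem_range_of_sum_choose_mul_eq_two_mul {A K : Type*} [CommRing A] [Field K] [CharZero K]
    [Algebra A K] (a : ℕ → A) (d : ℕ → K) (hd0 : d 0 = 1)
    (hd : ∀ n, 1 ≤ n →
      ∑ i ∈ range (n + 1), (n.choose i : K) * d i * d (n - i) = 2 * algebraMap A K (a n))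
    (n : ℕ) : d n ∈ (algebraMap A K).range := by
  induction n using Nat.strong_induction_on with
  | _ n ih =>
  rcases Nat.eq_zero_or_pos n with rfl | hn
  · exact ⟨1, by rw [map_one, hd0]⟩
  choose! c hc using ih
  obtain ⟨T, hT⟩ := two_dvd_sum_Ico_choose_mul_mul n c
  have hmiddle : ∑ i ∈ Ico 1 n, (n.choose i : K) * d i * d (n - i) = 2 * algebraMap A K T := by
    rw [← map_ofNat (algebraMap A K), ← map_mul, ← hT, map_sum]
    refine sum_congr rfl fun i hi => ?_
    have hi := mem_Ico.mp hi
    rw [map_mul, map_mul, map_natCast, hc i (by omega), hc (n - i) (by omega)]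
  have hsplit := hd n hn
  rw [range_eq_Ico, sum_eq_sum_Ico_succ_bot (by omega), sum_Ico_succ_top hn, hmiddle,
    Nat.choose_zero_right, Nat.choose_self, Nat.sub_zero, Nat.sub_self, hd0] at hsplit
  refine ⟨a n - T, mul_left_cancel₀ (two_ne_zero : (2 : K) ≠ 0) ?_⟩
  rw [map_sub]
  linear_combination -hsplit

theorem statement0_general (A : Type*) [CommRing A] [IsDomain A] [CharZero A]
    (a : ℕ → A) (h : PowerSeries (FractionRing A))
    (hh : ∀ j : ℕ, 1 ≤ j → PowerSeries.coeff j h =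
      2 * algebraMap A (FractionRing A) (a j) / (j.factorial : FractionRing A))
    (φ : PowerSeries (FractionRing A))
    (hφ0 : PowerSeries.constantCoeff φ = 1)
    (hφ : φ ^ 2 = h) :
    ∀ n : ℕ, ∃ c : A, PowerSeries.coeff n φ =
      algebraMap A (FractionRing A) c / (n.factorial : FractionRing A) := by
  intro n
  have hfac (m : ℕ) : (m.factorial : FractionRing A) ≠ 0 :=
    Nat.cast_ne_zero.mpr m.factorial_ne_zero
  obtain ⟨c, hc⟩ := mem_range_of_sum_choose_mul_eq_two_mul a (fun m => m.factorial * coeff m φ)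
    (by simp [coeff_zero_eq_constantCoeff, hφ0])
    (fun m hm => by
      rw [← factorial_mul_coeff_mul, ← sq, hφ, hh m hm, mul_div_cancel₀ _ (hfac m)])
    n
  exact ⟨c, by rw [hc, mul_div_cancel_left₀ _ (hfac n)]⟩

/-- **Square-root lemma for Hurwitz-integral series.**
Let `A` be an integral domain of characteristic 0, with fraction field `K`.
If `h(z) = 1 + 2a₁ z/1! + 2a₂ z²/2! + ⋯` with all `aⱼ ∈ A`, then the unique
power series `φ` with constant term `1` and `φ² = h` is Hurwitz integral over
`A`: every coefficient of `φ` is of the form `c_n / n!` with `c_n ∈ A`. -/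
theorem statement0 (A : Type*) [CommRing A] [IsDomain A] [CharZero A]
    (a : ℕ → A) (h : PowerSeries (FractionRing A))
    (hh0 : PowerSeries.constantCoeff h = 1)
    (hh : ∀ j : ℕ, 1 ≤ j → PowerSeries.coeff j h =
      2 * algebraMap A (FractionRing A) (a j) / (j.factorial : FractionRing A))
    (φ : PowerSeries (FractionRing A))
    (hφ0 : PowerSeries.constantCoeff φ = 1)
    (hφ : φ ^ 2 = h) :
    ∀ n : ℕ, ∃ c : A, PowerSeries.coeff n φ =
      algebraMap A (FractionRing A) c / (n.factorial : FractionRing A) :=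
  statement0_general A a h hh φ hφ0 hφ
end

section
/- Let s(t) ∈ ℤ[μ⃗][[t]] be the unique power series with s ≡ 0 mod t satisfying s = (1+μ₂s+μ₄s²+μ₆s³)t² + (μ₁s+μ₃s²)t, and set x⟨t⟩ = 1/s(t), y⟨t⟩ = -x⟨t⟩/t as formal Laurent series. Then x⟨t⟩ = t⁻² - μ₁ t⁻¹ - μ₂ - μ₃ t - (μ₁μ₃ + μ₄)t² + O(t³) and y⟨t⟩ = -t⁻³ + μ₁ t⁻² + μ₂ t⁻¹ + μ₃ + (μ₁μ₃ + μ₄)t + O(t²), and the pair (x⟨t⟩, y⟨t⟩) satisfies y² + (μ₁x + μ₃)y = x³ + μ₂x² + μ₄x + μ₆ as formal Laurent series. -/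
noncomputable section

/-- The coefficient ring `ℤ[μ₁,μ₂,μ₃,μ₄,μ₆]`. -/
abbrev CoefRing : Type := MvPolynomial (Fin 5) ℤ

def μ1 : CoefRing := MvPolynomial.X 0
def μ2 : CoefRing := MvPolynomial.X 1
def μ3 : CoefRing := MvPolynomial.X 2
def μ4 : CoefRing := MvPolynomial.X 3
def μ6 : CoefRing := MvPolynomial.X 4

open PowerSeries in
/-- The functional equation `s = (1 + μ₂s + μ₄s² + μ₆s³)t² + (μ₁s + μ₃s²)t`
satisfied by `s = 1/x` in the arithmetic parameter `t = -x/y` of the curve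
`y² + (μ₁x+μ₃)y = x³ + μ₂x² + μ₄x + μ₆`. -/
def SFunEq (s : PowerSeries CoefRing) : Prop :=
  s = (1 + C μ2 * s + C μ4 * s ^ 2 + C μ6 * s ^ 3) * X ^ 2
      + (C μ1 * s + C μ3 * s ^ 2) * X

/-- Embedding of power series into formal Laurent series. -/
abbrev toL : PowerSeries CoefRing →+* LaurentSeries CoefRing :=
  HahnSeries.ofPowerSeries ℤ CoefRing

/-- The Laurent series `t`. -/
def tL : LaurentSeries CoefRing := HahnSeries.single (1 : ℤ) (1 : CoefRing)

/-- Constant Laurent series. -/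
abbrev CL : CoefRing →+* LaurentSeries CoefRing := HahnSeries.C

/-- `IsXY s x y` says: `s` is the canonical solution of the functional equation,
`x = 1/s` (the expansion `x⟨t⟩` of the `x`-coordinate) and `y = -x/t`
(the expansion `y⟨t⟩` of the `y`-coordinate). -/
structure IsXY (s : PowerSeries CoefRing)
    (x y : LaurentSeries CoefRing) : Prop where
  s0 : PowerSeries.constantCoeff s = 0
  seq : SFunEq s
  hx : x * toL s = 1
  hy : y * tL = -x

lemma toL_coeff_neg (f : PowerSeries CoefRing) {n : ℤ} (hn : n < 0) :
    (toL f).coeff n = 0 := by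
  rw [HahnSeries.ofPowerSeries_apply]
  apply HahnSeries.embDomain_notin_range
  rintro ⟨m, hm⟩
  simp at hm
  omega

/-- Expansions `x⟨t⟩ = t⁻² - μ₁t⁻¹ - μ₂ - μ₃t - (μ₁μ₃+μ₄)t² + O(t³)`,
`y⟨t⟩ = -t⁻³ + μ₁t⁻² + μ₂t⁻¹ + μ₃ + (μ₁μ₃+μ₄)t + O(t²)`, with no worse poles,
and `(x⟨t⟩, y⟨t⟩)` satisfies the curve equation
`y² + (μ₁x+μ₃)y = x³ + μ₂x² + μ₄x + μ₆` as formal Laurent series. -/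
theorem statement2 (s : PowerSeries CoefRing) (x y : LaurentSeries CoefRing)
    (h : IsXY s x y) :
    (∀ n : ℤ, n < -2 → x.coeff n = 0) ∧
    x.coeff (-2) = 1 ∧ x.coeff (-1) = -μ1 ∧ x.coeff 0 = -μ2 ∧
    x.coeff 1 = -μ3 ∧ x.coeff 2 = -(μ1 * μ3 + μ4) ∧
    (∀ n : ℤ, n < -3 → y.coeff n = 0) ∧
    y.coeff (-3) = -1 ∧ y.coeff (-2) = μ1 ∧ y.coeff (-1) = μ2 ∧
    y.coeff 0 = μ3 ∧ y.coeff 1 = μ1 * μ3 + μ4 ∧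
    y ^ 2 + (CL μ1 * x + CL μ3) * y
      = x ^ 3 + CL μ2 * x ^ 2 + CL μ4 * x + CL μ6 := by
  obtain ⟨s0, seq, hx, hy⟩ := h
  unfold SFunEq at seq
  set c : ℕ → CoefRing := fun n => PowerSeries.coeff n s with hcdef
  have hc : ∀ n, PowerSeries.coeff n s = c n := fun n => rfl
  have key : ∀ n : ℕ, c (n+2) = ((if n = 0 then 1 else 0) + μ2 * c n
      + μ4 * PowerSeries.coeff n (s^2) + μ6 * PowerSeries.coeff n (s^3))
      + (μ1 * c (n+1) + μ3 * PowerSeries.coeff (n+1) (s^2)) := by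
    intro n
    conv_lhs => rw [← hc, seq]
    rw [map_add, PowerSeries.coeff_mul_X_pow]
    congr 1
    · simp [PowerSeries.coeff_one, hc]
    · rw [show n + 2 = (n+1) + 1 by ring, PowerSeries.coeff_succ_mul_X]
      simp [hc]
  have c0 : c 0 = 0 := by simpa [hcdef, PowerSeries.coeff_zero_eq_constantCoeff] using s0
  have q0 : PowerSeries.coeff 0 (s^2) = 0 := by
    simp [pow_two, PowerSeries.coeff_mul, Finset.Nat.sum_antidiagonal_eq_sum_range_succ_mk,
      Finset.sum_range_succ, hc, c0]
  have c1 : c 1 = 0 := by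
    have e := congrArg (PowerSeries.coeff 1) seq
    rw [map_add, PowerSeries.coeff_mul_X_pow' _ 2 1, show (1:ℕ) = 0 + 1 by ring,
      PowerSeries.coeff_succ_mul_X] at e
    simpa [hc, c0, q0, s0] using e
  have q1 : PowerSeries.coeff 1 (s^2) = 0 := by
    simp [pow_two, PowerSeries.coeff_mul, Finset.Nat.sum_antidiagonal_eq_sum_range_succ_mk,
      Finset.sum_range_succ, hc, c0, c1]
  have t0 : PowerSeries.coeff 0 (s^3) = 0 := by
    simp [pow_succ, PowerSeries.coeff_mul, Finset.Nat.sum_antidiagonal_eq_sum_range_succ_mk,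
      Finset.sum_range_succ, hc, c0, q0]
  have c2 : c 2 = 1 := by simpa [q0, q1, t0, c0, c1] using key 0
  have q2 : PowerSeries.coeff 2 (s^2) = 0 := by
    simp [pow_two, PowerSeries.coeff_mul, Finset.Nat.sum_antidiagonal_eq_sum_range_succ_mk,
      Finset.sum_range_succ, hc, c0, c1]
  have t1 : PowerSeries.coeff 1 (s^3) = 0 := by
    rw [pow_succ, PowerSeries.coeff_mul]
    simp [Finset.Nat.sum_antidiagonal_eq_sum_range_succ_mk, Finset.sum_range_succ, q0, q1, hc, c0, c1]
  have c3 : c 3 = μ1 := by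
    have := key 1
    simp only [q1, q2, t1, c1, c2, if_neg (by norm_num : (1:ℕ) ≠ 0)] at this
    rw [this]; ring
  have q3 : PowerSeries.coeff 3 (s^2) = 0 := by
    simp [pow_two, PowerSeries.coeff_mul, Finset.Nat.sum_antidiagonal_eq_sum_range_succ_mk,
      Finset.sum_range_succ, hc, c0, c1]
  have t2 : PowerSeries.coeff 2 (s^3) = 0 := by
    rw [pow_succ, PowerSeries.coeff_mul]
    simp [Finset.Nat.sum_antidiagonal_eq_sum_range_succ_mk, Finset.sum_range_succ, q0, q1, q2,
      hc, c0, c1]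
  have c4 : c 4 = μ1^2 + μ2 := by
    have := key 2
    simp only [q2, q3, t2, c2, c3, if_neg (by norm_num : (2:ℕ) ≠ 0)] at this
    rw [this]; ring
  have q4 : PowerSeries.coeff 4 (s^2) = 1 := by
    simp only [pow_two, PowerSeries.coeff_mul, Finset.Nat.sum_antidiagonal_eq_sum_range_succ_mk,
      Finset.sum_range_succ, hc, c0, c1, c2, c3, c4]
    ring
  have t3 : PowerSeries.coeff 3 (s^3) = 0 := by
    rw [pow_succ, PowerSeries.coeff_mul]
    simp [Finset.Nat.sum_antidiagonal_eq_sum_range_succ_mk, Finset.sum_range_succ, q0, q1, q2, q3,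
      hc, c0, c1]
  have c5 : c 5 = μ1^3 + 2*μ1*μ2 + μ3 := by
    have := key 3
    simp only [q3, q4, t3, c3, c4, if_neg (by norm_num : (3:ℕ) ≠ 0)] at this
    rw [this]; ring
  have q5 : PowerSeries.coeff 5 (s^2) = 2*μ1 := by
    simp only [pow_two, PowerSeries.coeff_mul, Finset.Nat.sum_antidiagonal_eq_sum_range_succ_mk,
      Finset.sum_range_succ, hc, c0, c1, c2, c3, c4, c5]
    ring
  have t4 : PowerSeries.coeff 4 (s^3) = 0 := by
    rw [pow_succ, PowerSeries.coeff_mul]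
    simp [Finset.Nat.sum_antidiagonal_eq_sum_range_succ_mk, Finset.sum_range_succ, q0, q1, q2, q3,
      q4, hc, c0, c1]
  have c6 : c 6 = μ1^4 + 3*μ1^2*μ2 + 3*μ1*μ3 + μ2^2 + μ4 := by
    have := key 4
    simp only [q4, q5, t4, c4, c5, if_neg (by norm_num : (4:ℕ) ≠ 0)] at this
    rw [this]; ring
  -- the unit part u of s
  set u : PowerSeries CoefRing := PowerSeries.mk (fun n => c (n+2)) with hudef
  have hu : ∀ n, PowerSeries.coeff n u = c (n+2) := fun n => PowerSeries.coeff_mk _ _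
  have hSu : toL s = HahnSeries.single (2:ℤ) (1:CoefRing) * toL u := by
    apply HahnSeries.ext
    funext n
    have h2 : (HahnSeries.single (2:ℤ) (1:CoefRing) * toL u).coeff n
        = (toL u).coeff (n-2) := by
      have := HahnSeries.coeff_single_mul_add (r := (1:CoefRing)) (x := toL u)
        (a := n - 2) (b := 2)
      simpa using this
    rcases lt_or_ge n 0 with hn | hn
    · rw [toL_coeff_neg _ hn, h2, toL_coeff_neg _ (by omega)]
    · lift n to ℕ using hn
      rw [HahnSeries.ofPowerSeries_apply_coeff, h2]
      by_cases h2n : 2 ≤ n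
      · obtain ⟨m, rfl⟩ : ∃ m:ℕ, n = m + 2 := ⟨n - 2, by omega⟩
        rw [show ((m+2:ℕ):ℤ) - 2 = (m:ℤ) by push_cast; ring,
          HahnSeries.ofPowerSeries_apply_coeff, hu]
      · interval_cases n
        · rw [toL_coeff_neg _ (by norm_num)]; exact c0
        · rw [toL_coeff_neg _ (by norm_num)]; exact c1
  have hu0 : PowerSeries.constantCoeff u = 1 := by
    rw [← PowerSeries.coeff_zero_eq_constantCoeff, hu]; exact c2
  set v := u.invOfUnit 1 with hvdef
  have huv : u * v = 1 := PowerSeries.mul_invOfUnit u 1 (by simp [hu0])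
  have v0 : PowerSeries.coeff 0 v = 1 := by
    have e := congrArg (PowerSeries.coeff 0) huv
    simpa [PowerSeries.coeff_mul, Finset.Nat.sum_antidiagonal_eq_sum_range_succ_mk,
      Finset.sum_range_succ, hu, c2] using e
  have v1 : PowerSeries.coeff 1 v = -μ1 := by
    have e := congrArg (PowerSeries.coeff 1) huv
    simp only [PowerSeries.coeff_mul, Finset.Nat.sum_antidiagonal_eq_sum_range_succ_mk,
      Finset.sum_range_succ, hu, c2, c3, v0, PowerSeries.coeff_one, reduceIte] at e
    norm_num [Finset.sum_range_zero] at e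
    linear_combination e
  have v2 : PowerSeries.coeff 2 v = -μ2 := by
    have e := congrArg (PowerSeries.coeff 2) huv
    simp only [PowerSeries.coeff_mul, Finset.Nat.sum_antidiagonal_eq_sum_range_succ_mk,
      Finset.sum_range_succ, hu, c2, c3, c4, v0, v1, PowerSeries.coeff_one, reduceIte] at e
    norm_num [Finset.sum_range_zero] at e
    linear_combination e
  have v3 : PowerSeries.coeff 3 v = -μ3 := by
    have e := congrArg (PowerSeries.coeff 3) huv
    simp only [PowerSeries.coeff_mul, Finset.Nat.sum_antidiagonal_eq_sum_range_succ_mk,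
      Finset.sum_range_succ, hu, c2, c3, c4, c5, v0, v1, v2, PowerSeries.coeff_one, reduceIte] at e
    norm_num [Finset.sum_range_zero] at e
    linear_combination e
  have v4 : PowerSeries.coeff 4 v = -(μ1*μ3 + μ4) := by
    have e := congrArg (PowerSeries.coeff 4) huv
    simp only [PowerSeries.coeff_mul, Finset.Nat.sum_antidiagonal_eq_sum_range_succ_mk,
      Finset.sum_range_succ, hu, c2, c3, c4, c5, c6, v0, v1, v2, v3, PowerSeries.coeff_one, reduceIte] at e
    norm_num [Finset.sum_range_zero] at e
    linear_combination e
  -- x = t⁻² · toL v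
  have hxeq : x = HahnSeries.single (-2:ℤ) 1 * toL v := by
    have hinv : (HahnSeries.single (-2:ℤ) (1:CoefRing) * toL v) * toL s = 1 := by
      rw [hSu, show (HahnSeries.single (-2:ℤ) (1:CoefRing) * toL v) *
          (HahnSeries.single (2:ℤ) (1:CoefRing) * toL u)
          = (HahnSeries.single (-2:ℤ) (1:CoefRing) * HahnSeries.single (2:ℤ) (1:CoefRing))
            * (toL v * toL u) by ring, HahnSeries.single_mul_single, ← map_mul,
        mul_comm v u, huv]
      norm_num [HahnSeries.single_zero_one]
    calc x = x * ((HahnSeries.single (-2:ℤ) 1 * toL v) * toL s) := by rw [hinv, mul_one]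
      _ = (x * toL s) * (HahnSeries.single (-2:ℤ) 1 * toL v) := by ring
      _ = HahnSeries.single (-2:ℤ) 1 * toL v := by rw [hx, one_mul]
  have hxc : ∀ n : ℤ, x.coeff n = (toL v).coeff (n + 2) := by
    intro n
    rw [hxeq]
    have := HahnSeries.coeff_single_mul_add (r := (1:CoefRing)) (x := toL v)
      (a := n + 2) (b := -2)
    simpa [show n + 2 + -2 = n by ring] using this
  have hxnat : ∀ n : ℕ, x.coeff ((n:ℤ) - 2) = PowerSeries.coeff n v := by
    intro n
    rw [hxc, show (n:ℤ) - 2 + 2 = (n:ℤ) by ring, HahnSeries.ofPowerSeries_apply_coeff]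
  have hxneg : ∀ n : ℤ, n < -2 → x.coeff n = 0 := fun n hn => by
    rw [hxc]; exact toL_coeff_neg _ (by omega)
  have X2 : x.coeff (-2) = 1 := by simpa [v0] using hxnat 0
  have X1 : x.coeff (-1) = -μ1 := by simpa [v1] using hxnat 1
  have X0 : x.coeff 0 = -μ2 := by simpa [v2] using hxnat 2
  have Xp1 : x.coeff 1 = -μ3 := by simpa [v3] using hxnat 3
  have Xp2 : x.coeff 2 = -(μ1*μ3+μ4) := by simpa [v4] using hxnat 4
  -- y
  have hTinv : tL * HahnSeries.single (-1:ℤ) (1:CoefRing) = 1 := by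
    rw [tL, HahnSeries.single_mul_single]
    norm_num [HahnSeries.single_zero_one]
  have hyeq : y = -(x * HahnSeries.single (-1:ℤ) 1) := by
    calc y = y * (tL * HahnSeries.single (-1:ℤ) 1) := by rw [hTinv, mul_one]
      _ = (y * tL) * HahnSeries.single (-1:ℤ) 1 := by ring
      _ = -(x * HahnSeries.single (-1:ℤ) 1) := by rw [hy]; ring
  have hyc : ∀ n : ℤ, y.coeff n = -(x.coeff (n+1)) := by
    intro n
    rw [hyeq, HahnSeries.coeff_neg, neg_inj]
    have h := HahnSeries.coeff_mul_single_add (r := (1:CoefRing)) (x := x) (a := n+1) (b := -1)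
    rw [mul_one] at h
    rw [← h]
    congr 1
    ring
  have hyneg : ∀ n : ℤ, n < -3 → y.coeff n = 0 := fun n hn => by
    rw [hyc, hxneg _ (by omega), neg_zero]
  have Y3 : y.coeff (-3) = -1 := by rw [hyc]; norm_num [X2]
  have Y2 : y.coeff (-2) = μ1 := by rw [hyc]; norm_num [X1]
  have Y1 : y.coeff (-1) = μ2 := by rw [hyc]; norm_num [X0]
  have Y0 : y.coeff 0 = μ3 := by rw [hyc]; norm_num [Xp1]
  have Yp1 : y.coeff 1 = μ1*μ3+μ4 := by rw [hyc]; norm_num [Xp2]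
  -- curve equation
  have htL : HahnSeries.single (1:ℤ) (1:CoefRing) = tL := rfl
  have hSL : toL s = (1 + CL μ2 * toL s + CL μ4 * (toL s)^2 + CL μ6 * (toL s)^3) * tL^2
      + (CL μ1 * toL s + CL μ3 * (toL s)^2) * tL := by
    conv_lhs => rw [seq]
    simp only [map_add, map_mul, map_pow, map_one, HahnSeries.ofPowerSeries_C,
      HahnSeries.ofPowerSeries_X, htL]
  have hS0 : toL s ≠ 0 := by
    intro h0; rw [h0, mul_zero] at hx; exact one_ne_zero hx.symm
  have hT0 : tL ≠ 0 := HahnSeries.single_ne_zero one_ne_zero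
  have curve : y ^ 2 + (CL μ1 * x + CL μ3) * y
      = x ^ 3 + CL μ2 * x ^ 2 + CL μ4 * x + CL μ6 := by
    apply mul_right_cancel₀ (b := toL s ^ 3 * tL ^ 2)
      (mul_ne_zero (pow_ne_zero _ hS0) (pow_ne_zero _ hT0))
    linear_combination ((y*tL - x)*(toL s)^3 + (CL μ1*x + CL μ3)*(toL s)^3*tL) * hy
      + ((toL s)*(x*toL s+1) - (CL μ1*(toL s)*(x*toL s+1)+CL μ3*(toL s)^2)*tL
        - (((x*toL s-1)^2+3*(x*toL s-1)+3) + CL μ2*(toL s)*(x*toL s+1)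
          + CL μ4*(toL s)^2)*tL^2) * hx + hSL
  exact ⟨hxneg, X2, X1, X0, Xp1, Xp2, hyneg, Y3, Y2, Y1, Y0, Yp1, curve⟩
end
end

section
/- With x⟨t⟩, y⟨t⟩ the formal Laurent series expansions of the coordinates of the general Weierstrass curve in the parameter t = -x/y, the holomorphic differential ω₁ = dx/(2y + μ₁x + μ₃) has expansion ω₁ = (1 + μ₁ t + (μ₂ + μ₁²)t² + (2μ₁μ₂ + 2μ₃ + μ₁³)t³ + ...) dt, with all coefficients in ℤ[μ₁,μ₂,μ₃,μ₄,μ₆]; i.e., (dx⟨t⟩/dt)/(2y⟨t⟩ + μ₁x⟨t⟩ + μ₃) ∈ 1 + t·ℤ[μ⃗][[t]]. -/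
noncomputable section

/-!
Write `t` for the parameter and `s = 1/x`. Differentiating `SFunEq` implicitly gives
`t·s'·D = 2s - (μ₁s + μ₃s²)t` with `D = 1 - ∂ₛ(right-hand side)`, and substituting `x = 1/s`,
`y = -x/t` turns this into `dx/dt = D⁻¹·(2y + μ₁x + μ₃)`. The point is that `D` has constant
coefficient `1`, so `D⁻¹` exists over `ℤ[μ⃗]` and not just over `ℤ[½, μ⃗]`. Since `s ≡ t² mod t³`,
`D ≡ 1 - μ₁t - μ₂t² - 2μ₃t³ mod t⁴`, and inverting this gives the first coefficients of `D⁻¹`.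
-/

open PowerSeries

theorem neg_mul_sq_eq_mul_of_implicit_deriv {A : Type*} [CommRing A]
    {x y S S' T D W a₁ a₃ : A} (hx : x * S = 1) (hy : y * T = -x) (hT : IsUnit T)
    (hS' : S' * T * D = 2 * S - (a₁ * S + a₃ * S ^ 2) * T) (hW : W * D = 1) :
    -S' * x ^ 2 = W * (2 * y + a₁ * x + a₃) := by
  rw [← hT.mul_left_inj]
  linear_combination (S' * x ^ 2 * T) * hW - W * x ^ 2 * hS' - 2 * W * hy
    + W * (-2 * x + a₁ * x * T + a₃ * T * (x * S + 1)) * hx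

theorem PowerSeries.coeff_of_mul_eq_one_sub {R : Type*} [CommRing R] {a b c : R}
    {w e : R⟦X⟧} (h : w * (1 - C a * X - C b * X ^ 2 - C c * X ^ 3 + X ^ 4 * e) = 1) :
    constantCoeff w = 1 ∧ coeff 1 w = a ∧ coeff 2 w = b + a ^ 2 ∧
      coeff 3 w = 2 * a * b + c + a ^ 3 := by
  set p : R⟦X⟧ :=
    1 + C a * X + C (b + a ^ 2) * X ^ 2 + C (2 * a * b + c + a ^ 3) * X ^ 3
  -- `p` inverts `1 - aX - bX² - cX³` modulo `X⁴`
  obtain ⟨f, hp⟩ : ∃ f,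
      p * (1 - C a * X - C b * X ^ 2 - C c * X ^ 3 + X ^ 4 * e) = 1 + X ^ 4 * f :=
    ⟨p * e - (C (a * (2 * a * b + c + a ^ 3) + b * (b + a ^ 2) + c * a)
        + C (b * (2 * a * b + c + a ^ 3) + c * (b + a ^ 2)) * X
        + C (c * (2 * a * b + c + a ^ 3)) * X ^ 2),
      by simp only [p, map_add, map_mul, map_pow, map_ofNat]; ring⟩
  have hw : w = p + X ^ 4 * -(f * w) := by linear_combination p * h - w * hp
  have hcoeff : ∀ n < 4, coeff n w = coeff n p := fun n hn => by
    rw [hw, map_add, coeff_X_pow_mul', if_neg (by omega), add_zero]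
  refine ⟨?_, ?_, ?_, ?_⟩
  · rw [← coeff_zero_eq_constantCoeff_apply, hcoeff 0 (by norm_num)]
    simp [p]
  all_goals
    rw [hcoeff _ (by norm_num)]
    simp only [p, LinearMap.map_add, coeff_one, coeff_C_mul, coeff_X, coeff_X_pow]
    norm_num

/-- The partial derivative in `s` of `s - ((1 + μ₂s + μ₄s² + μ₆s³)t² + (μ₁s + μ₃s²)t)`. -/
def sFunEqPartial (s : CoefRing⟦X⟧) : CoefRing⟦X⟧ :=
  1 - (C μ2 + 2 * C μ4 * s + 3 * C μ6 * s ^ 2) * X ^ 2 - (C μ1 + 2 * C μ3 * s) * X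

namespace SFunEq

variable {s : CoefRing⟦X⟧}

theorem derivative_mul_X_mul_sFunEqPartial (hs : SFunEq s) :
    d⁄dX CoefRing s * X * sFunEqPartial s = 2 * s - (C μ1 * s + C μ3 * s ^ 2) * X := by
  unfold SFunEq at hs
  have hd := congrArg (d⁄dX CoefRing) hs
  simp only [map_add, Derivation.leibniz, Derivation.leibniz_pow, Derivation.map_one_eq_zero,
    derivative_C, derivative_X, smul_eq_mul, nsmul_eq_mul] at hd
  rw [sFunEqPartial]
  linear_combination X * hd - 2 * hs

theorem exists_eq_X_sq_add (hs : SFunEq s) (h0 : constantCoeff s = 0) :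
    ∃ r, s = X ^ 2 + X ^ 3 * r := by
  unfold SFunEq at hs
  set F := 1 + C μ2 * s + C μ4 * s ^ 2 + C μ6 * s ^ 3
  have hF : constantCoeff F = 1 := by simp [F, h0]
  obtain ⟨s₁, hs₁⟩ := X_dvd_iff.mpr h0
  set s₂ := F + C μ1 * s₁ + C μ3 * X * s₁ ^ 2
  have hs₂ : s₁ = X * s₂ := mul_left_cancel₀ X_ne_zero <| by
    linear_combination hs - (1 - C μ1 * X - C μ3 * X * (s + X * s₁)) * hs₁
  have hs₁0 : constantCoeff s₁ = 0 := by rw [hs₂, map_mul, constantCoeff_X, zero_mul]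
  obtain ⟨r, hr⟩ := X_dvd_iff.mpr (show constantCoeff (s₂ - 1) = 0 by simp [s₂, hF, hs₁0])
  exact ⟨r, by rw [hs₁, hs₂]; linear_combination X ^ 2 * hr⟩

theorem exists_sFunEqPartial_eq (hs : SFunEq s) (h0 : constantCoeff s = 0) :
    ∃ e, sFunEqPartial s = 1 - C μ1 * X - C μ2 * X ^ 2 - C (2 * μ3) * X ^ 3 + X ^ 4 * e := by
  obtain ⟨r, rfl⟩ := hs.exists_eq_X_sq_add h0
  exact ⟨-(2 * C μ3 * r + 2 * C μ4 * (1 + X * r) + 3 * C μ6 * X ^ 2 * (1 + X * r) ^ 2),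
    by simp only [sFunEqPartial, map_mul, map_ofNat]; ring⟩

end SFunEq

theorem isUnit_tL : IsUnit tL :=
  IsUnit.of_mul_eq_one (HahnSeries.single (-1) 1) (by simp [tL, HahnSeries.single_mul_single])

open PowerSeries in
/-- Here `dx⟨t⟩/dt` is written `-s'·x²`, as `x = 1/s`. -/
theorem statement3 (s : PowerSeries CoefRing) (x y : LaurentSeries CoefRing)
    (h : IsXY s x y) :
    ∃ w : PowerSeries CoefRing,
      -(toL s.derivativeFun) * x ^ 2 = toL w * (2 * y + CL μ1 * x + CL μ3) ∧
      constantCoeff w = 1 ∧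
      coeff 1 w = μ1 ∧
      coeff 2 w = μ2 + μ1 ^ 2 ∧
      coeff 3 w = 2 * μ1 * μ2 + 2 * μ3 + μ1 ^ 3 := by
  obtain ⟨w, hw⟩ : ∃ w, w * sFunEqPartial s = 1 :=
    (isUnit_iff_constantCoeff.mpr (by simp [sFunEqPartial])).exists_left_inv
  obtain ⟨e, he⟩ := h.seq.exists_sFunEqPartial_eq h.s0
  refine ⟨w, ?_, coeff_of_mul_eq_one_sub (he ▸ hw)⟩
  have hS' := congrArg toL h.seq.derivative_mul_X_mul_sFunEqPartial
  simp only [map_mul, map_sub, map_add, map_pow, map_ofNat, HahnSeries.ofPowerSeries_X,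
    HahnSeries.ofPowerSeries_C] at hS'
  exact neg_mul_sq_eq_mul_of_implicit_deriv h.hx h.hy isUnit_tL hS'
    (by rw [← map_mul, hw, map_one])
end
end

section
/- Define b⟨t₁,t₂⟩ by the decomposition ((y₁+y₂+μ₁x₂+μ₃)/(x₂-x₁) - 1/t₁ + 1/t₂)·ω₁⟨t₁⟩ = (element of ℤ[μ⃗][[t₁,t₂]])·ω₁⟨t₁⟩ + b⟨t₁,t₂⟩ dt₁/(t₂-t₁) with b⟨t₁,t₂⟩ ∈ ℤ[μ⃗][[t₁,t₂]]. Then b⟨t₁,t₁⟩ = 1, i.e., b⟨t₁,t₂⟩ ∈ 1 + (t₂-t₁)·ℤ[μ⃗][[t₁,t₂]]. -/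
/-!
Evaluation on the diagonal, `f ↦ f(t, t)`, is a ring homomorphism `ℤ[μ⃗][[t₁,t₂]] → ℤ[μ⃗][[t]]`
whose kernel is the ideal generated by `t₂ - t₁`. Writing `s(t₁) - s(t₂) = (t₁ - t₂)·c` with
`c(t, t) = s'(t)`, the decomposition cleared of denominators becomes, after cancelling `t₁ - t₂`,
an identity `b·P = Q` in `ℤ[μ⃗][[t₁,t₂]]`. On the diagonal both `P` and `Q` become
`t·s·s'·(2 - μ₁t - μ₃st) ≠ 0`, so `b(t, t) = 1`.
-/

noncomputable section

/-- The two-variable power series ring `ℤ[μ⃗][[t₁,t₂]] = (ℤ[μ⃗][[t₁]])[[t₂]]`: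
the inner variable is `t₁`, the outer one is `t₂`. -/
abbrev PS2 : Type := PowerSeries (PowerSeries CoefRing)

/-- `t₁` as an element of `ℤ[μ⃗][[t₁,t₂]]`. -/
def T1 : PS2 := PowerSeries.C PowerSeries.X
/-- `t₂` as an element of `ℤ[μ⃗][[t₁,t₂]]`. -/
def T2 : PS2 := PowerSeries.X
/-- A series `f(t)` regarded as `f(t₁)`. -/
def inT1 (f : PowerSeries CoefRing) : PS2 := PowerSeries.C f
/-- A series `f(t)` regarded as `f(t₂)`. -/
def inT2 (f : PowerSeries CoefRing) : PS2 := PowerSeries.map (PowerSeries.C (R := CoefRing)) f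
/-- The coefficient of `t₁^i t₂^j`. -/
def coeff2 (i j : ℕ) (f : PS2) : CoefRing :=
  PowerSeries.coeff i (PowerSeries.coeff j f)

/-- The field of fractions of `ℤ[μ⃗][[t₁,t₂]]`, in which `x⟨tᵢ⟩`, `y⟨tᵢ⟩`,
`1/tᵢ`, `1/(t₁-t₂)` all make sense. -/
abbrev K2 : Type := FractionRing PS2

/-- The canonical embedding `ℤ[μ⃗][[t₁,t₂]] → K2`. -/
def ι : PS2 →+* K2 := algebraMap PS2 K2

/-- A constant `a ∈ ℤ[μ⃗]` as an element of `K2`. -/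
def Cι (a : CoefRing) : K2 :=
  ι (PowerSeries.C (PowerSeries.C a))

/-- Evaluation of `b(t₁,t₂)` on the diagonal `t₂ = t₁`. -/
def diagEval (b : PS2) : PowerSeries CoefRing :=
  PowerSeries.mk fun n => ∑ k ∈ Finset.range (n + 1),
    PowerSeries.coeff (n - k) (PowerSeries.coeff k b)


open PowerSeries Finset

theorem PowerSeries.eq_zero_of_C_eq_X_sub_C_X_mul {R : Type*} [CommRing R] {g : R⟦X⟧}
    {h : R⟦X⟧⟦X⟧} (H : C g = (X - C X) * h) : g = 0 := by
  have hsucc (j : ℕ) : coeff j h = X * coeff (j + 1) h := by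
    have := congrArg (coeff (j + 1)) H
    rw [coeff_C, if_neg j.succ_ne_zero, sub_mul, map_sub, coeff_succ_X_mul, coeff_C_mul] at this
    exact sub_eq_zero.mp this.symm
  have hpow (m : ℕ) : coeff 0 h = X ^ m * coeff m h := by
    induction m with
    | zero => simp
    | succ m ih => rw [ih, hsucc m, pow_succ, mul_assoc]
  have h0 : coeff 0 h = 0 := by
    ext m
    rw [hpow (m + 1), mul_comm, coeff_mul_X_pow', if_neg (by omega), map_zero]
  have := congrArg (coeff 0) H
  rwa [coeff_zero_C, sub_mul, map_sub, coeff_zero_X_mul, coeff_C_mul, h0, mul_zero,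
    sub_zero] at this

/-- `∑ₖ tᵏ fⱼ₊ₖ(t)`, where `f = ∑ⱼ fⱼ(t₁) t₂ʲ`. -/
def diagTail (j : ℕ) (f : PS2) : CoefRing⟦X⟧ :=
  mk fun m => ∑ k ∈ range (m + 1), coeff (m - k) (coeff (j + k) f)

theorem diagTail_zero (f : PS2) : diagTail 0 f = diagEval f := by
  simp only [diagTail, diagEval, zero_add]

theorem diagTail_eq_coeff_add_X_mul (j : ℕ) (f : PS2) :
    diagTail j f = coeff j f + X * diagTail (j + 1) f := by
  ext (_ | m)
  · simp [diagTail]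
  · rw [map_add, coeff_succ_X_mul, diagTail, diagTail, coeff_mk, coeff_mk, sum_range_succ',
      add_comm]
    simp only [Nat.add_sub_add_right, add_assoc, add_comm 1, Nat.sub_zero, add_zero]

def diagQuot (f : PS2) : PS2 := mk fun j => diagTail (j + 1) f

theorem eq_inT1_diagEval_add_mul_diagQuot (f : PS2) :
    f = inT1 (diagEval f) + (T2 - T1) * diagQuot f := by
  ext (_ | j) : 1
  · rw [map_add, T1, T2, sub_mul, map_sub, coeff_zero_X_mul, coeff_C_mul, inT1, coeff_zero_C,
      diagQuot, coeff_mk, ← diagTail_zero, diagTail_eq_coeff_add_X_mul]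
    ring
  · rw [map_add, T1, T2, sub_mul, map_sub, coeff_succ_X_mul, coeff_C_mul, inT1,
      coeff_C, if_neg j.succ_ne_zero, diagQuot, coeff_mk, coeff_mk,
      diagTail_eq_coeff_add_X_mul (j + 1)]
    ring

theorem diagEval_eq_of_eq_inT1_add_mul {f h : PS2} {g : CoefRing⟦X⟧}
    (H : f = inT1 g + (T2 - T1) * h) : diagEval f = g := by
  refine sub_eq_zero.mp (eq_zero_of_C_eq_X_sub_C_X_mul (h := h - diagQuot f) ?_)
  have := eq_inT1_diagEval_add_mul_diagQuot f
  rw [map_sub]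
  simp only [inT1, T1, T2] at this H
  linear_combination H - this

def diagHom : PS2 →+* CoefRing⟦X⟧ where
  toFun := diagEval
  map_one' := diagEval_eq_of_eq_inT1_add_mul (h := 0) (by simp [inT1])
  map_zero' := diagEval_eq_of_eq_inT1_add_mul (h := 0) (by simp [inT1])
  map_add' f g := diagEval_eq_of_eq_inT1_add_mul (h := diagQuot f + diagQuot g) <| by
    conv_lhs => rw [eq_inT1_diagEval_add_mul_diagQuot f, eq_inT1_diagEval_add_mul_diagQuot g]
    simp only [inT1, map_add]
    ring
  map_mul' f g :=
    diagEval_eq_of_eq_inT1_add_mul (h := diagQuot f * g + inT1 (diagEval f) * diagQuot g) <| by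
      have hf := eq_inT1_diagEval_add_mul_diagQuot f
      have hg := eq_inT1_diagEval_add_mul_diagQuot g
      simp only [inT1, map_mul] at hf hg ⊢
      linear_combination g * hf + C (diagEval f) * hg

theorem diagHom_apply (f : PS2) : diagHom f = diagEval f := rfl

theorem eq_one_add_mul_of_diagHom_eq_one {f : PS2} (hf : diagHom f = 1) :
    f = 1 + (T2 - T1) * diagQuot f := by
  simpa [← diagHom_apply, hf, inT1] using eq_inT1_diagEval_add_mul_diagQuot f

theorem diagHom_inT1 (f : CoefRing⟦X⟧) : diagHom (inT1 f) = f :=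
  diagEval_eq_of_eq_inT1_add_mul (h := 0) (by simp)

theorem diagHom_T1 : diagHom T1 = X := diagHom_inT1 X

theorem diagHom_T2 : diagHom T2 = X :=
  diagEval_eq_of_eq_inT1_add_mul (h := 1) (by simp [T1, inT1])

def divDiff (f : CoefRing⟦X⟧) : PS2 :=
  mk fun j => mk fun m => coeff (m + j + 1) f

theorem inT1_sub_inT2 (f : CoefRing⟦X⟧) : inT1 f - inT2 f = (T1 - T2) * divDiff f := by
  ext (_ | j) : 1 <;> ext (_ | m) : 1 <;>
    simp [T1, T2, inT1, inT2, divDiff, sub_mul, coeff_map, coeff_C, coeff_succ_X_mul,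
      coeff_zero_X_mul, -coeff_zero_eq_constantCoeff, ← add_assoc, add_right_comm _ 1]

theorem diagHom_inT2 (f : CoefRing⟦X⟧) : diagHom (inT2 f) = f :=
  diagEval_eq_of_eq_inT1_add_mul (h := divDiff f) (by linear_combination -inT1_sub_inT2 f)

theorem diagHom_divDiff (f : CoefRing⟦X⟧) : diagHom (divDiff f) = d⁄dX CoefRing f := by
  ext n
  rw [diagHom_apply, diagEval, coeff_mk, coeff_derivative]
  simp only [divDiff, coeff_mk]
  rw [sum_congr rfl fun k hk => by rw [Nat.sub_add_cancel (by simpa [Nat.lt_succ_iff] using hk)]]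
  simp [mul_comm]

/-- The decomposition in terms of `aᵢ = s(tᵢ) = 1/xᵢ`, `uᵢ = tᵢ`, `d = s'(t₁)`, `mᵢ = μᵢ`,
cleared of denominators. -/
theorem mul_eq_of_decomposition {F : Type*} [Field F] {a₁ a₂ u₁ u₂ c d m₁ m₃ e b : F}
    (ha₁ : a₁ ≠ 0) (ha₂ : a₂ ≠ 0) (hu₁ : u₁ ≠ 0) (hu₂ : u₂ ≠ 0) (hu : u₁ - u₂ ≠ 0) (hc : c ≠ 0)
    (hq : 2 - m₁ * u₁ - m₃ * a₁ * u₁ ≠ 0) (hdiff : a₁ - a₂ = (u₁ - u₂) * c)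
    (h : ((-a₁⁻¹ / u₁ + -a₂⁻¹ / u₂ + m₁ * a₂⁻¹ + m₃) / (a₂⁻¹ - a₁⁻¹) - u₁⁻¹ + u₂⁻¹) *
        (-d * a₁⁻¹ ^ 2 / (2 * (-a₁⁻¹ / u₁) + m₁ * a₁⁻¹ + m₃))
      = e * (-d * a₁⁻¹ ^ 2 / (2 * (-a₁⁻¹ / u₁) + m₁ * a₁⁻¹ + m₃)) + b / (u₂ - u₁)) :
    b * (a₁ * u₂ * c * (2 - m₁ * u₁ - m₃ * a₁ * u₁))
      = d * (a₂ * u₂ + a₁ * u₁ - m₁ * a₁ * u₁ * u₂ - m₃ * a₁ * a₂ * u₁ * u₂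
          - (u₁ - u₂) ^ 2 * c - (u₂ - u₁) * e * u₁ * u₂ * c) := by
  generalize hq' : 2 - m₁ * u₁ - m₃ * a₁ * u₁ = q at hq ⊢
  have hX : a₂⁻¹ - a₁⁻¹ = (u₁ - u₂) * c / (a₁ * a₂) := by
    rw [← hdiff]; field_simp
  have hW : 2 * (-a₁⁻¹ / u₁) + m₁ * a₁⁻¹ + m₃ = -q / (a₁ * u₁) := by
    rw [← hq']; field_simp; ring
  have hu' : u₂ - u₁ ≠ 0 := fun h0 => hu (by linear_combination -h0)
  rw [hX, hW] at h
  field_simp at h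
  refine mul_left_cancel₀ hu ?_
  linear_combination -h

theorem SFunEq.ne_zero {s : CoefRing⟦X⟧} (hseq : SFunEq s) : s ≠ 0 := by
  rintro rfl
  simp only [SFunEq, mul_zero, add_zero, ne_eq, OfNat.ofNat_ne_zero, not_false_eq_true, zero_pow,
    one_mul, zero_mul] at hseq
  exact pow_ne_zero 2 X_ne_zero hseq.symm

theorem SFunEq.derivative_ne_zero {s : CoefRing⟦X⟧} (hs0 : constantCoeff s = 0)
    (hseq : SFunEq s) : d⁄dX CoefRing s ≠ 0 := fun h =>
  hseq.ne_zero (derivative.ext (by rw [h, map_zero]) (by rw [hs0, map_zero]))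

theorem two_sub_mul_X_ne_zero (a b s : CoefRing⟦X⟧) : 2 - a * X - b * s * X ≠ 0 := fun h => by
  have h0 := congrArg constantCoeff h
  simp only [map_sub, map_mul, constantCoeff_X, mul_zero, sub_zero, map_zero] at h0
  rw [map_ofNat] at h0
  exact two_ne_zero h0

theorem T1_ne_T2 : T1 ≠ T2 := fun h => by
  simpa [T1, T2, coeff_C] using congrArg (coeff 1) h

theorem ι_injective : Function.Injective ι := IsFractionRing.injective PS2 K2

theorem ι_ne_zero_of_diagHom_ne_zero {f : PS2} (hf : diagHom f ≠ 0) : ι f ≠ 0 :=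
  (map_ne_zero_iff ι ι_injective).mpr (ne_of_apply_ne diagHom (by rwa [map_zero]))

/-- For any decomposition
`((y₁+y₂+μ₁x₂+μ₃)/(x₂-x₁) - 1/t₁ + 1/t₂)·ω₁⟨t₁⟩/dt₁ = E + b/(t₂-t₁)` with
`E, b ∈ ℤ[μ⃗][[t₁,t₂]]` (the term `E` being the one absorbed into
`ℤ[μ⃗][[t₁,t₂]]·ω₁⟨t₁⟩`, rewritten here with `ω₁⟨t₁⟩/dt₁` a unit of
`1 + t₁ℤ[μ⃗][[t₁]]`), one has `b⟨t₁,t₁⟩ = 1`, i.e.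
`b ∈ 1 + (t₂-t₁)·ℤ[μ⃗][[t₁,t₂]]`. -/
theorem statement9 (s : PowerSeries CoefRing)
    (hs0 : PowerSeries.constantCoeff s = 0) (hseq : SFunEq s)
    (E b : PS2)
    (hdec :
      let X1 : K2 := (ι (inT1 s))⁻¹
      let X2 : K2 := (ι (inT2 s))⁻¹
      let Y1 : K2 := -X1 / ι T1
      let Y2 : K2 := -X2 / ι T2
      let W1 : K2 := (-(ι (inT1 s.derivativeFun)) * X1 ^ 2) /
        (2 * Y1 + Cι μ1 * X1 + Cι μ3)
      ((Y1 + Y2 + Cι μ1 * X2 + Cι μ3) / (X2 - X1) - (ι T1)⁻¹ + (ι T2)⁻¹) * W1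
        = ι E * W1 + ι b / (ι T2 - ι T1)) :
    diagEval b = 1 ∧ ∃ g : PS2, b = 1 + (T2 - T1) * g := by
  have hs := hseq.ne_zero
  have hs' := hseq.derivative_ne_zero hs0
  have hq := two_sub_mul_X_ne_zero (C μ1) (C μ3) s
  have hq₁ : ι (2 - inT1 (C μ1) * T1 - inT1 (C μ3) * inT1 s * T1) ≠ 0 :=
    ι_ne_zero_of_diagHom_ne_zero
      (by simpa only [map_sub, map_mul, map_ofNat, diagHom_inT1, diagHom_T1] using hq)
  have hT : ι (T1 - T2) ≠ 0 := (map_ne_zero_iff ι ι_injective).mpr (sub_ne_zero.mpr T1_ne_T2)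
  have key : b * (inT1 s * T2 * divDiff s * (2 - inT1 (C μ1) * T1 - inT1 (C μ3) * inT1 s * T1))
      = inT1 (d⁄dX CoefRing s) * (inT2 s * T2 + inT1 s * T1 - inT1 (C μ1) * inT1 s * T1 * T2
        - inT1 (C μ3) * inT1 s * inT2 s * T1 * T2 - (T1 - T2) ^ 2 * divDiff s
        - (T2 - T1) * E * T1 * T2 * divDiff s) :=
    ι_injective <| by
      simpa only [map_mul, map_sub, map_add, map_pow, map_ofNat] using
        mul_eq_of_decomposition (m₁ := ι (inT1 (C μ1))) (m₃ := ι (inT1 (C μ3)))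
          (d := ι (inT1 (d⁄dX CoefRing s)))
          (ι_ne_zero_of_diagHom_ne_zero (by rwa [diagHom_inT1]))
          (ι_ne_zero_of_diagHom_ne_zero (by rwa [diagHom_inT2]))
          (ι_ne_zero_of_diagHom_ne_zero (by rw [diagHom_T1]; exact X_ne_zero))
          (ι_ne_zero_of_diagHom_ne_zero (by rw [diagHom_T2]; exact X_ne_zero))
          (by rwa [← map_sub]) (ι_ne_zero_of_diagHom_ne_zero (by rwa [diagHom_divDiff]))
          (by simpa only [map_sub, map_mul, map_ofNat] using hq₁)
          (by rw [← map_sub, inT1_sub_inT2, map_mul, map_sub]) hdec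
  have hdiag := congrArg diagHom key
  simp only [map_mul, map_sub, map_add, map_pow, map_ofNat, diagHom_inT1, diagHom_inT2,
    diagHom_T1, diagHom_T2, diagHom_divDiff, sub_self] at hdiag
  have hb : diagHom b = 1 := by
    refine mul_right_cancel₀ (b := s * X * d⁄dX CoefRing s * (2 - C μ1 * X - C μ3 * s * X)) ?_ ?_
    · exact mul_ne_zero (mul_ne_zero (mul_ne_zero hs X_ne_zero) hs') hq
    · linear_combination hdiag
  exact ⟨hb, diagQuot b, eq_one_add_mul_of_diagHom_eq_one hb⟩
end
end

section
/- For the curve f(x,y) = y²+(μ₁x+μ₃)y-(x³+μ₂x²+μ₄x+μ₆) = 0, the expansion of η₁ = -x dx/(2y+μ₁x+μ₃) in the arithmetic parameter t satisfies η₁⟨t⟩/dt ∈ -t⁻² + t·ℤ[μ⃗][[t]]; in particular the coefficients of t⁻¹ and t⁰ vanish, and the expansion begins -t⁻² - μ₃t - (μ₄+2μ₁μ₃)t² - (2μ₁μ₄+2μ₂μ₃+3μ₁²μ₃)t³ - ... -/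
noncomputable section

/-!
Since `s = t² + μ₁t³ + ⋯`, we can write `s = t²·u` with `u` a unit power series, so that
`x = t⁻²·u⁻¹` and `η₁⟨t⟩/dt = -x·w = -t⁻²·p` with `p = w/u`. Clearing the denominators `x`
and `y = -x/t` in the definition of `w` gives the power series identity
`w·s·(2 - μ₁t - μ₃st) = t·ds/dt`.
Its `t^(n+2)`-coefficient is `2·w_n` plus terms in `w_0, …, w_(n-1)`, and `ℤ[μ⃗]` has no
`2`-torsion, so the first coefficients of `s` (from the functional equation), then of `w`, then of
`p` (from `w = u·p`) are computed recursively.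
-/

open PowerSeries

theorem LaurentSeries.mul_ofPowerSeries_eq_single_mul {R : Type*} [CommRing R]
    {x : LaurentSeries R} {u : PowerSeries R} (k : ℕ)
    (hx : x * HahnSeries.ofPowerSeries ℤ R (X ^ k * u) = 1) (p : PowerSeries R) :
    x * HahnSeries.ofPowerSeries ℤ R (u * p) =
      HahnSeries.single (-k : ℤ) 1 * HahnSeries.ofPowerSeries ℤ R p := by
  have hk : HahnSeries.single (-k : ℤ) (1 : R) * HahnSeries.single (k : ℤ) 1 = 1 := by
    simp [HahnSeries.single_mul_single]
  rw [map_mul, HahnSeries.ofPowerSeries_X_pow] at hx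
  rw [map_mul]
  linear_combination (HahnSeries.single (-k : ℤ) 1 * HahnSeries.ofPowerSeries ℤ R p) * hx
    - (x * HahnSeries.ofPowerSeries ℤ R u * HahnSeries.ofPowerSeries ℤ R p) * hk

theorem LaurentSeries.coeff_single_mul_ofPowerSeries {R : Type*} [Semiring R] (k : ℤ) (r : R)
    (p : PowerSeries R) (n : ℤ) :
    (HahnSeries.single k r * HahnSeries.ofPowerSeries ℤ R p).coeff n =
      if n - k < 0 then 0 else r * coeff (n - k).natAbs p := by
  rw [← sub_add_cancel n k, HahnSeries.coeff_single_mul_add, add_sub_cancel_right,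
    PowerSeries.coeff_coe]
  split_ifs <;> simp

theorem SFunEq.coeff_add_two {s : PowerSeries CoefRing} (hs : SFunEq s) (n : ℕ) :
    coeff (n + 2) s = coeff n (1 + C μ2 * s + C μ4 * s ^ 2 + C μ6 * s ^ 3)
      + coeff (n + 1) (C μ1 * s + C μ3 * s ^ 2) := by
  conv_lhs => rw [hs]
  rw [map_add, coeff_mul_X_pow, coeff_succ_mul_X]

theorem SFunEq.initial_coeffs {s : PowerSeries CoefRing} (hs : SFunEq s)
    (h0 : constantCoeff s = 0) :
    coeff 1 s = 0 ∧ coeff 2 s = 1 ∧ coeff 3 s = μ1 ∧ coeff 4 s = μ2 + μ1 ^ 2 ∧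
    coeff 5 s = μ3 + 2 * μ1 * μ2 + μ1 ^ 3 ∧
    coeff 6 s = μ4 + μ2 ^ 2 + 3 * μ1 * μ3 + 3 * μ1 ^ 2 * μ2 + μ1 ^ 4 ∧
    coeff 7 s = 3 * μ2 * μ3 + 3 * μ1 * μ4 + 3 * μ1 * μ2 ^ 2 + 6 * μ1 ^ 2 * μ3
      + 4 * μ1 ^ 3 * μ2 + μ1 ^ 5 := by
  have e1 : coeff 1 s = 0 := by
    simpa [coeff_mul, Finset.Nat.sum_antidiagonal_succ, h0] using congrArg (coeff 1) hs
  have E2 := hs.coeff_add_two 0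
  have E3 := hs.coeff_add_two 1
  have E4 := hs.coeff_add_two 2
  have E5 := hs.coeff_add_two 3
  have E6 := hs.coeff_add_two 4
  have E7 := hs.coeff_add_two 5
  simp only [map_add, coeff_one, coeff_C, pow_succ, pow_zero, one_mul, coeff_mul,
    Finset.Nat.sum_antidiagonal_succ, Finset.Nat.antidiagonal_zero, Finset.sum_singleton,
    Nat.reduceAdd, reduceIte, Nat.succ_ne_zero, coeff_zero_eq_constantCoeff_apply, h0, e1]
    at E2 E3 E4 E5 E6 E7
  have e2 : coeff 2 s = 1 := by linear_combination E2
  rw [e2] at E3 E4 E5 E6 E7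
  have e3 : coeff 3 s = μ1 := by linear_combination E3
  rw [e3] at E4 E5 E6 E7
  have e4 : coeff 4 s = μ2 + μ1 ^ 2 := by linear_combination E4
  rw [e4] at E5 E6 E7
  have e5 : coeff 5 s = μ3 + 2 * μ1 * μ2 + μ1 ^ 3 := by linear_combination E5
  rw [e5] at E6 E7
  have e6 : coeff 6 s = μ4 + μ2 ^ 2 + 3 * μ1 * μ3 + 3 * μ1 ^ 2 * μ2 + μ1 ^ 4 := by
    linear_combination E6
  rw [e6] at E7
  exact ⟨e1, e2, e3, e4, e5, e6, by linear_combination E7⟩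

theorem SFunEq.exists_isUnit_eq_X_sq_mul {s : PowerSeries CoefRing} (hs : SFunEq s)
    (h0 : constantCoeff s = 0) : ∃ u, IsUnit u ∧ s = X ^ 2 * u := by
  obtain ⟨e1, e2, -⟩ := hs.initial_coeffs h0
  obtain ⟨u, hsu⟩ : X ^ 2 ∣ s :=
    X_pow_dvd_iff.2 fun m hm => by
      interval_cases m
      exacts [(coeff_zero_eq_constantCoeff_apply s).trans h0, e1]
  refine ⟨u, isUnit_iff_constantCoeff.2 ?_, hsu⟩
  rw [← coeff_zero_eq_constantCoeff_apply, ← coeff_X_pow_mul u 2 0, ← hsu, zero_add, e2]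
  exact isUnit_one

theorem IsXY.mul_eq_derivative_mul_X {s : PowerSeries CoefRing} {x y : LaurentSeries CoefRing}
    (h : IsXY s x y) {w : PowerSeries CoefRing}
    (hw : -(toL (d⁄dX CoefRing s)) * x ^ 2 = toL w * (2 * y + CL μ1 * x + CL μ3)) :
    w * s * (2 - C μ1 * X - C μ3 * s * X) = d⁄dX CoefRing s * X := by
  apply HahnSeries.ofPowerSeries_injective (Γ := ℤ)
  have htL : toL X = tL := HahnSeries.ofPowerSeries_X
  simp only [map_mul, map_sub, map_ofNat, HahnSeries.ofPowerSeries_C, htL]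
  linear_combination (toL s ^ 2 * tL) * hw
    + (toL (d⁄dX CoefRing s) * tL * (x * toL s + 1) - 2 * toL w * toL s
      + CL μ1 * toL w * toL s * tL) * h.hx + (2 * toL w * toL s ^ 2) * h.hy

theorem SFunEq.initial_coeffs_of_mul_eq_derivative_mul_X {s w : PowerSeries CoefRing}
    (hs : SFunEq s) (h0 : constantCoeff s = 0)
    (hws : w * s * (2 - C μ1 * X - C μ3 * s * X) = d⁄dX CoefRing s * X) :
    constantCoeff w = 1 ∧ coeff 1 w = μ1 ∧ coeff 2 w = μ2 + μ1 ^ 2 ∧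
    coeff 3 w = 2 * μ3 + 2 * μ1 * μ2 + μ1 ^ 3 ∧
    coeff 4 w = 2 * μ4 + μ2 ^ 2 + 6 * μ1 * μ3 + 3 * μ1 ^ 2 * μ2 + μ1 ^ 4 ∧
    coeff 5 w = 6 * μ2 * μ3 + 6 * μ1 * μ4 + 3 * μ1 * μ2 ^ 2 + 12 * μ1 ^ 2 * μ3
      + 4 * μ1 ^ 3 * μ2 + μ1 ^ 5 := by
  obtain ⟨e1, e2, e3, e4, e5, e6, e7⟩ := hs.initial_coeffs h0
  rw [← map_ofNat C 2] at hws
  have E2 := congrArg (coeff 2) hws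
  have E3 := congrArg (coeff 3) hws
  have E4 := congrArg (coeff 4) hws
  have E5 := congrArg (coeff 5) hws
  have E6 := congrArg (coeff 6) hws
  have E7 := congrArg (coeff 7) hws
  simp only [map_sub, coeff_C, coeff_X, coeff_mul, coeff_derivative,
    Finset.Nat.sum_antidiagonal_succ, Finset.Nat.antidiagonal_zero, Finset.sum_singleton,
    Nat.reduceAdd, reduceIte, Nat.reduceEqDiff, Nat.cast_ofNat, coeff_zero_eq_constantCoeff_apply,
    h0, e1, e2, e3, e4, e5, e6, e7] at E2 E3 E4 E5 E6 E7
  have w0 : constantCoeff w = 1 := mul_left_cancel₀ two_ne_zero (by linear_combination E2)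
  rw [w0] at E3 E4 E5 E6 E7
  have w1 : coeff 1 w = μ1 := mul_left_cancel₀ two_ne_zero (by linear_combination E3)
  rw [w1] at E4 E5 E6 E7
  have w2 : coeff 2 w = μ2 + μ1 ^ 2 := mul_left_cancel₀ two_ne_zero (by linear_combination E4)
  rw [w2] at E5 E6 E7
  have w3 : coeff 3 w = 2 * μ3 + 2 * μ1 * μ2 + μ1 ^ 3 :=
    mul_left_cancel₀ two_ne_zero (by linear_combination E5)
  rw [w3] at E6 E7
  have w4 : coeff 4 w = 2 * μ4 + μ2 ^ 2 + 6 * μ1 * μ3 + 3 * μ1 ^ 2 * μ2 + μ1 ^ 4 :=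
    mul_left_cancel₀ two_ne_zero (by linear_combination E6)
  rw [w4] at E7
  exact ⟨w0, w1, w2, w3, w4, mul_left_cancel₀ two_ne_zero (by linear_combination E7)⟩

theorem SFunEq.initial_coeffs_of_eq_mul {s w u p : PowerSeries CoefRing}
    (hs : SFunEq s) (h0 : constantCoeff s = 0)
    (hws : w * s * (2 - C μ1 * X - C μ3 * s * X) = d⁄dX CoefRing s * X)
    (hsu : s = X ^ 2 * u) (hwp : w = u * p) :
    constantCoeff p = 1 ∧ coeff 1 p = 0 ∧ coeff 2 p = 0 ∧ coeff 3 p = μ3 ∧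
    coeff 4 p = μ4 + 2 * μ1 * μ3 ∧ coeff 5 p = 2 * μ1 * μ4 + 2 * μ2 * μ3 + 3 * μ1 ^ 2 * μ3 := by
  obtain ⟨-, e2, e3, e4, e5, e6, e7⟩ := hs.initial_coeffs h0
  obtain ⟨w0, w1, w2, w3, w4, w5⟩ := hs.initial_coeffs_of_mul_eq_derivative_mul_X h0 hws
  have hu (n : ℕ) : coeff n u = coeff (n + 2) s := by rw [hsu, coeff_X_pow_mul]
  have E0 := congrArg (coeff 0) hwp
  have E1 := congrArg (coeff 1) hwp
  have E2 := congrArg (coeff 2) hwp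
  have E3 := congrArg (coeff 3) hwp
  have E4 := congrArg (coeff 4) hwp
  have E5 := congrArg (coeff 5) hwp
  simp only [coeff_mul, Finset.Nat.sum_antidiagonal_succ, Finset.Nat.antidiagonal_zero,
    Finset.sum_singleton, hu, Nat.reduceAdd, e2, e3, e4, e5, e6, e7,
    coeff_zero_eq_constantCoeff_apply, w0, w1, w2, w3, w4, w5] at E0 E1 E2 E3 E4 E5
  have p0 : constantCoeff p = 1 := by linear_combination -E0
  rw [p0] at E1 E2 E3 E4 E5
  have p1 : coeff 1 p = 0 := by linear_combination -E1
  rw [p1] at E2 E3 E4 E5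
  have p2 : coeff 2 p = 0 := by linear_combination -E2
  rw [p2] at E3 E4 E5
  have p3 : coeff 3 p = μ3 := by linear_combination -E3
  rw [p3] at E4 E5
  have p4 : coeff 4 p = μ4 + 2 * μ1 * μ3 := by linear_combination -E4
  rw [p4] at E5
  exact ⟨p0, p1, p2, p3, p4, by linear_combination -E5⟩

open PowerSeries in
/-- The expansion of `η₁ = -x·dx/(2y+μ₁x+μ₃)`: with `w = (dx⟨t⟩/dt)/f_y⟨t⟩`
(so `η₁⟨t⟩/dt = -x⟨t⟩·w`), one has
`η₁⟨t⟩/dt ∈ -t⁻² + t·ℤ[μ⃗][[t]]`; in particular the coefficients of `t⁻¹` and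
`t⁰` vanish, and the expansion begins
`-t⁻² - μ₃t - (μ₄+2μ₁μ₃)t² - (2μ₁μ₄+2μ₂μ₃+3μ₁²μ₃)t³ - ⋯`. -/
theorem statement10 (s : PowerSeries CoefRing) (x y : LaurentSeries CoefRing)
    (h : IsXY s x y) (w : PowerSeries CoefRing)
    (hw : -(toL s.derivativeFun) * x ^ 2 = toL w * (2 * y + CL μ1 * x + CL μ3)) :
    (∀ n : ℤ, n < -2 → (-x * toL w).coeff n = 0) ∧
    (-x * toL w).coeff (-2) = -1 ∧
    (-x * toL w).coeff (-1) = 0 ∧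
    (-x * toL w).coeff 0 = 0 ∧
    (-x * toL w).coeff 1 = -μ3 ∧
    (-x * toL w).coeff 2 = -(μ4 + 2 * μ1 * μ3) ∧
    (-x * toL w).coeff 3 = -(2 * μ1 * μ4 + 2 * μ2 * μ3 + 3 * μ1 ^ 2 * μ3) := by
  obtain ⟨u, hu, hsu⟩ := h.seq.exists_isUnit_eq_X_sq_mul h.s0
  obtain ⟨p, hwp⟩ := hu.dvd (a := w)
  obtain ⟨p0, p1, p2, p3, p4, p5⟩ := h.seq.initial_coeffs_of_eq_mul h.s0
    (h.mul_eq_derivative_mul_X hw) hsu hwp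
  have hη : x * toL w = HahnSeries.single (-2 : ℤ) 1 * toL p := by
    rw [hwp]
    exact LaurentSeries.mul_ofPowerSeries_eq_single_mul 2 (hsu ▸ h.hx) p
  rw [show -x * toL w = -(x * toL w) by ring, hη]
  simp only [HahnSeries.coeff_neg, LaurentSeries.coeff_single_mul_ofPowerSeries]
  refine ⟨fun n hn => by rw [if_pos (by omega), neg_zero], ?_⟩
  norm_num [p0, p1, p2, p3, p4, p5]
end
end

section
/- For f(x,y) = y²+(μ₁x+μ₃)y-(x³+μ₂x²+μ₄x+μ₆) and any t, the identity f(x⟨t⟩, Y) = (Y - y⟨t⟩)(Y - y⟨t'⟩) holds as polynomials in Y over formal Laurent series, and consequently f_y(x⟨t⟩, y⟨t⟩) = 2y⟨t⟩ + μ₁x⟨t⟩ + μ₃ = y⟨t⟩ - y⟨t'⟩. -/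
/-
Clearing `s = 1/x` from the functional equation and substituting `t = -x/y` turns it into the
curve equation `y² + (μ₁x + μ₃)y = x³ + μ₂x² + μ₄x + μ₆`, so `y⟨t⟩` is a root of `f(x⟨t⟩, Y)`.
The relation `t'(y + μ₁x + μ₃) = x` forces `y⟨t'⟩ = -x/t' = -(y + μ₁x + μ₃)`, which is the other
root by Vieta; the derivative identity is then linear.
-/

noncomputable section

open Polynomial in
theorem X_sq_add_C_mul_X_sub_C_eq_mul {R : Type*} [CommRing R] {b c y : R}
    (hy : y ^ 2 + b * y = c) :
    X ^ 2 + C b * X - C c = (X - C y) * (X - C (-(y + b))) := by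
  rw [← hy]
  simp only [map_add, map_mul, map_neg, map_pow]
  ring

theorem weierstrass_eq_of_funEq {R : Type*} [CommRing R] {a₁ a₂ a₃ a₄ a₆ S T x y : R}
    (hS : S = (1 + a₂ * S + a₄ * S ^ 2 + a₆ * S ^ 3) * T ^ 2 + (a₁ * S + a₃ * S ^ 2) * T)
    (hx : x * S = 1) (hy : y * T = -x) :
    y ^ 2 + (a₁ * x + a₃) * y = x ^ 3 + a₂ * x ^ 2 + a₄ * x + a₆ := by
  have hS' : x ^ 2 = (x ^ 3 + a₂ * x ^ 2 + a₄ * x + a₆) * T ^ 2 + (a₁ * x ^ 2 + a₃ * x) * T := by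
    linear_combination x ^ 3 * hS
      + (T ^ 2 * (a₂ * x ^ 2 + a₄ * x * (x * S + 1) + a₆ * ((x * S) ^ 2 + x * S + 1))
        + T * (a₁ * x ^ 2 + a₃ * x * (x * S + 1)) - x ^ 2) * hx
  refine ((IsUnit.of_mul_eq_one S hx).pow 2).mul_left_cancel ?_
  linear_combination y ^ 2 * hS'
    + ((x ^ 3 + a₂ * x ^ 2 + a₄ * x + a₆) * (y * T - x) + (a₁ * x ^ 2 + a₃ * x) * y) * hy

theorem eq_neg_of_mul_eq_of_mul_eq_neg {R : Type*} [CommRing R] {x u v w : R} (hx : IsUnit x)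
    (hu : u * w = x) (hv : v * u = -x) : v = -w :=
  hx.mul_left_cancel <| by linear_combination w * hv - v * hu

theorem SFunEq.map_toL {s : PowerSeries CoefRing} (hs : SFunEq s) :
    toL s = (1 + CL μ2 * toL s + CL μ4 * toL s ^ 2 + CL μ6 * toL s ^ 3) * tL ^ 2
      + (CL μ1 * toL s + CL μ3 * toL s ^ 2) * tL := by
  simpa [tL, HahnSeries.ofPowerSeries_X, HahnSeries.ofPowerSeries_C] using congrArg toL hs

/-- `f(x⟨t⟩, Y) = (Y - y⟨t⟩)(Y - y⟨t'⟩)` as polynomials in `Y` over formal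
Laurent series (here `y⟨t'⟩ = -x⟨t⟩/t'`), and consequently
`f_y(x⟨t⟩,y⟨t⟩) = 2y⟨t⟩ + μ₁x⟨t⟩ + μ₃ = y⟨t⟩ - y⟨t'⟩`. -/
theorem statement11 (s : PowerSeries CoefRing) (x y : LaurentSeries CoefRing)
    (h : IsXY s x y) (T' : PowerSeries CoefRing)
    (hT' : toL T' * (y + CL μ1 * x + CL μ3) = x)
    (Y' : LaurentSeries CoefRing) (hY' : Y' * toL T' = -x) :
    (Polynomial.X ^ 2 + Polynomial.C (CL μ1 * x + CL μ3) * Polynomial.X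
        - Polynomial.C (x ^ 3 + CL μ2 * x ^ 2 + CL μ4 * x + CL μ6)
      = (Polynomial.X - Polynomial.C y) * (Polynomial.X - Polynomial.C Y')) ∧
    2 * y + CL μ1 * x + CL μ3 = y - Y' := by
  have hcurve := weierstrass_eq_of_funEq h.seq.map_toL h.hx h.hy
  have hY'eq : Y' = -(y + (CL μ1 * x + CL μ3)) := by
    rw [eq_neg_of_mul_eq_of_mul_eq_neg (IsUnit.of_mul_eq_one _ h.hx) hT' hY']
    ring
  subst hY'eq
  exact ⟨X_sq_add_C_mul_X_sub_C_eq_mul hcurve, by ring⟩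
end
end

section
/- The formal Laurent series f_y(x⟨t⟩,y⟨t⟩) = 2y⟨t⟩+μ₁x⟨t⟩+μ₃ factors as (1/(tt')³)·(t-t')·(t² + higher order terms in ℤ[μ⃗][[t]]), where t' ∈ t·ℤ[μ₁,μ₃][[t]] is the involution series; equivalently (t-t')·x⟨t⟩/(tt') = y⟨t⟩ - y⟨t'⟩. -/
noncomputable section

/-!
Write `s = t²·d` with `d(0) = 1`; then `x·t² = e := d⁻¹` is a power series with `e(0) = 1`.
Multiplying the defining equation of `t'` by `t·s` and using `y·t = -x`, `x·s = 1` gives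
`t'·(μ₁t + μ₃ts - 1) = t`, so `t' = t·w` with `w(0) = -1`. The same two relations give
`f_y·t·t' = x·(t - t')`, hence `f_y·(tt')³ = (t - t')·x·t²·t'²`, and `x·t²·t'² = e·t'² = t²·e·w²`
has `t²`-coefficient `e(0)·w(0)² = 1`.
-/

open PowerSeries

theorem PowerSeries.exists_eq_X_mul_of_mul_eq_X {R : Type*} [CommRing R] {a b : R⟦X⟧}
    (hab : a * b = X) (hb : IsUnit b) : ∃ c, a = X * c ∧ c * b = 1 := by
  obtain ⟨c, hc⟩ := hb.exists_right_inv
  refine ⟨c, ?_, by rw [mul_comm, hc]⟩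
  calc a = a * b * c := by rw [mul_assoc, hc, mul_one]
    _ = X * c := by rw [hab]

theorem SFunEq.exists_eq_X_sq_mul {s : PowerSeries CoefRing} (hs : SFunEq s) :
    ∃ d, s = X ^ 2 * d ∧ constantCoeff d = 1 := by
  have h0 : constantCoeff s = 0 := by
    rw [hs]; simp
  have h1 : coeff 1 s = 0 := by
    rw [hs]; simp [coeff_mul_X_pow', h0]
  have h1sq : coeff 1 (s ^ 2) = 0 := by
    simp [sq, coeff_mul, Finset.Nat.antidiagonal_succ, h0]
  have h2 : coeff 2 s = 1 := by
    rw [hs]; simp [coeff_mul_X_pow', h0, h1, h1sq]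
  obtain ⟨d, rfl⟩ : X ^ 2 ∣ s := X_pow_dvd_iff.mpr fun m hm => by
    interval_cases m <;> simp_all
  exact ⟨d, rfl, by simpa [coeff_X_pow_mul'] using h2⟩

theorem toL_X : toL X = tL := HahnSeries.ofPowerSeries_X

theorem IsXY.exists_x_mul_tL_sq {s : PowerSeries CoefRing} {x y : LaurentSeries CoefRing}
    (h : IsXY s x y) : ∃ e, x * tL ^ 2 = toL e ∧ constantCoeff e = 1 := by
  obtain ⟨d, hsd, hd⟩ := h.seq.exists_eq_X_sq_mul
  obtain ⟨e, hed⟩ := (isUnit_iff_constantCoeff.mpr (hd ▸ isUnit_one)).exists_left_inv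
  have hsL : toL s = tL ^ 2 * toL d := by
    rw [hsd, map_mul, map_pow, toL_X]
  have hedL : toL e * toL d = 1 := by rw [← map_mul, hed, map_one]
  refine ⟨e, ?_, ?_⟩
  · linear_combination (-x * tL ^ 2) * hedL + toL e * h.hx - toL e * x * hsL
  · simpa [hd] using congrArg constantCoeff hed

theorem IsXY.exists_eq_X_mul_of_involution {s : PowerSeries CoefRing}
    {x y : LaurentSeries CoefRing} (h : IsXY s x y) {T' : PowerSeries CoefRing}
    (hT' : toL T' * (y + CL μ1 * x + CL μ3) = x) :
    ∃ w, T' = X * w ∧ constantCoeff w = -1 := by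
  set P := C μ1 * X + C μ3 * (X * s) - 1
  have hTP : T' * P = X := by
    apply HahnSeries.ofPowerSeries_injective (Γ := ℤ)
    simp only [P, map_mul, map_sub, map_add, map_one, HahnSeries.ofPowerSeries_C, toL_X]
    linear_combination (tL * toL s) * hT' - (toL T' * toL s) * h.hy
      + (toL T' + tL - CL μ1 * toL T' * tL) * h.hx
  have hP : constantCoeff P = -1 := by simp [P]
  obtain ⟨w, hTw, hwP⟩ :=
    exists_eq_X_mul_of_mul_eq_X hTP (isUnit_iff_constantCoeff.mpr (hP ▸ isUnit_one.neg))
  refine ⟨w, hTw, ?_⟩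
  have := congrArg constantCoeff hwP
  rw [map_mul, hP, map_one] at this
  linear_combination -this

/-- **(Lemma 3.07.)** `f_y(x⟨t⟩,y⟨t⟩) = (1/(tt')³)·(t-t')·(t² + ⋯)` with the
last factor in `t² + t³ℤ[μ⃗][[t]]`; equivalently
`(t-t')·x⟨t⟩/(tt') = y⟨t⟩ - y⟨t'⟩`.  Here `t'` is the involution series and
`y⟨t'⟩ = -x⟨t⟩/t'`. -/
theorem statement12 (s : PowerSeries CoefRing) (x y : LaurentSeries CoefRing)
    (h : IsXY s x y) (T' : PowerSeries CoefRing)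
    (hT' : toL T' * (y + CL μ1 * x + CL μ3) = x)
    (Y' : LaurentSeries CoefRing) (hY' : Y' * toL T' = -x) :
    (tL - toL T') * x = (y - Y') * (tL * toL T') ∧
    ∃ g : PowerSeries CoefRing,
      constantCoeff g = 0 ∧
      coeff 1 g = 0 ∧
      coeff 2 g = 1 ∧
      (2 * y + CL μ1 * x + CL μ3) * (tL * toL T') ^ 3
        = (tL - toL T') * toL g := by
  obtain ⟨e, hxe, he⟩ := h.exists_x_mul_tL_sq
  obtain ⟨w, hTw, hw⟩ := h.exists_eq_X_mul_of_involution hT'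
  have hg : e * T' ^ 2 = X ^ 2 * (e * w ^ 2) := by rw [hTw]; ring
  have hgL : toL (e * T' ^ 2) = x * tL ^ 2 * toL T' ^ 2 := by rw [map_mul, map_pow, hxe]
  refine ⟨by linear_combination tL * hY' - toL T' * h.hy, e * T' ^ 2, ?_, ?_, ?_, ?_⟩
  · simp [hg]
  · simp [hg, coeff_X_pow_mul']
  · simp [hg, coeff_X_pow_mul', he, hw]
  · linear_combination (tL * toL T') ^ 2 * (tL * hT' + toL T' * h.hy) - (tL - toL T') * hgL
end
end

section
/- Define q(t) = -x⟨t⟩·t·t' as a formal power series. Then q(t) ∈ 1 + t·ℤ[μ⃗][[t]], with expansion q(t) = 1 - μ₂t² - μ₁μ₂t³ - (μ₁²μ₂+μ₄)t⁴ - (μ₁³μ₂+2μ₁μ₄+μ₂μ₃)t⁵ - ...; in particular the coefficient of t vanishes. -/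
noncomputable section

/-!
Put `w = 1 + μ₂s + μ₄s² + μ₆s³`, so that the functional equation reads
`s·(1 - μ₁t - μ₃ts) = t²·w`. Multiplying the defining relation of `t'` by `t·s = t/x` gives
`t'·(μ₁t + μ₃ts - 1) = t`, and the two together give `t·t'·w = -s`, i.e. `-x·t·t' = 1/w`.
The coefficients of `1/w` up to `t⁵` come from those of `s = t² + μ₁t³ + ⋯`, which the
functional equation determines recursively.
-/

section

open PowerSeries

theorem PowerSeries.coeff_low_of_mul_eq_one {R : Type*} [CommRing R] {w q : PowerSeries R}
    (hwq : w * q = 1) (h0 : constantCoeff w = 1) (h1 : coeff 1 w = 0) :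
    constantCoeff q = 1 ∧ coeff 1 q = 0 ∧ coeff 2 q = -coeff 2 w ∧
      coeff 3 q = -coeff 3 w ∧ coeff 4 q = coeff 2 w ^ 2 - coeff 4 w ∧
      coeff 5 q = 2 * coeff 2 w * coeff 3 w - coeff 5 w := by
  have k (n : ℕ) : ∑ i ∈ Finset.range (n + 1), coeff i w * coeff (n - i) q =
      if n = 0 then 1 else 0 := by
    rw [← Finset.Nat.sum_antidiagonal_eq_sum_range_succ (fun i j => coeff i w * coeff j q),
      ← coeff_mul, hwq, coeff_one]
  have k0 := k 0
  have k1 := k 1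
  have k2 := k 2
  have k3 := k 3
  have k4 := k 4
  have k5 := k 5
  simp only [Finset.sum_range_succ, Finset.sum_range_zero, coeff_zero_eq_constantCoeff, h0, h1]
    at k0 k1 k2 k3 k4 k5
  norm_num at k0 k1 k2 k3 k4 k5
  have e2 : coeff 2 q = -coeff 2 w := by linear_combination k2 - coeff 2 w * k0
  have e3 : coeff 3 q = -coeff 3 w := by
    linear_combination k3 - coeff 2 w * k1 - coeff 3 w * k0
  refine ⟨k0, k1, e2, e3, ?_, ?_⟩
  · linear_combination k4 - coeff 2 w * e2 - coeff 3 w * k1 - coeff 4 w * k0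
  · linear_combination k5 - coeff 2 w * e3 - coeff 3 w * e2 - coeff 4 w * k1 - coeff 5 w * k0

def cubicFactor (s : PowerSeries CoefRing) : PowerSeries CoefRing :=
  1 + C μ2 * s + C μ4 * s ^ 2 + C μ6 * s ^ 3

namespace SFunEq

variable {s : PowerSeries CoefRing}

theorem eq_cubicFactor (hs : SFunEq s) :
    s = cubicFactor s * X ^ 2 + (C μ1 * s + C μ3 * s ^ 2) * X :=
  hs

theorem coeff_add_two_s13 (hs : SFunEq s) (n : ℕ) :
    coeff (n + 2) s =
      coeff n (cubicFactor s) + μ1 * coeff (n + 1) s + μ3 * coeff (n + 1) (s ^ 2) := by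
  conv_lhs => rw [hs.eq_cubicFactor]
  rw [map_add, coeff_mul_X_pow, coeff_succ_mul_X, map_add, coeff_C_mul, coeff_C_mul, add_assoc]

theorem coeff_low (hs : SFunEq s) (h0 : constantCoeff s = 0) :
    coeff 1 s = 0 ∧ coeff 2 s = 1 ∧ coeff 3 s = μ1 ∧
      coeff 4 s = μ1 ^ 2 + μ2 ∧ coeff 5 s = μ1 ^ 3 + 2 * μ1 * μ2 + μ3 := by
  have c1 : coeff 1 s = 0 := by
    rw [hs.eq_cubicFactor]
    simp [h0, coeff_mul_X_pow']
  have k0 := hs.coeff_add_two_s13 0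
  have k1 := hs.coeff_add_two_s13 1
  have k2 := hs.coeff_add_two_s13 2
  have k3 := hs.coeff_add_two_s13 3
  simp only [cubicFactor, map_add, coeff_one, pow_two, pow_three, coeff_mul,
    Finset.Nat.sum_antidiagonal_eq_sum_range_succ_mk, Finset.sum_range_succ,
    Finset.sum_range_zero, c1] at k0 k1 k2 k3
  norm_num [h0] at k0 k1 k2 k3
  have c3 : coeff 3 s = μ1 := by linear_combination k1 + μ1 * k0
  have c4 : coeff 4 s = μ1 ^ 2 + μ2 := by linear_combination k2 + μ2 * k0 + μ1 * c3
  have c5 : coeff 5 s = μ1 ^ 3 + 2 * μ1 * μ2 + μ3 := by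
    linear_combination k3 + μ2 * c3 + μ1 * c4 + μ3 * (coeff 2 s + 1) * k0
  exact ⟨c1, k0, c3, c4, c5⟩

theorem coeff_cubicFactor_low (hs : SFunEq s) (h0 : constantCoeff s = 0) :
    constantCoeff (cubicFactor s) = 1 ∧ coeff 1 (cubicFactor s) = 0 ∧
      coeff 2 (cubicFactor s) = μ2 ∧ coeff 3 (cubicFactor s) = μ1 * μ2 ∧
      coeff 4 (cubicFactor s) = μ2 * (μ1 ^ 2 + μ2) + μ4 ∧
      coeff 5 (cubicFactor s) = μ2 * (μ1 ^ 3 + 2 * μ1 * μ2 + μ3) + 2 * μ1 * μ4 := by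
  obtain ⟨c1, c2, c3, c4, c5⟩ := hs.coeff_low h0
  simp only [cubicFactor, map_add, coeff_one, pow_two, pow_three, coeff_mul,
    Finset.Nat.sum_antidiagonal_eq_sum_range_succ_mk, Finset.sum_range_succ,
    Finset.sum_range_zero, c1, c2, c3, c4, c5]
  norm_num [h0]
  constructor <;> ring

end SFunEq

theorem toL_C (a : CoefRing) : toL (C a) = CL a := HahnSeries.ofPowerSeries_C a

namespace IsXY

variable {s T' : PowerSeries CoefRing} {x y : LaurentSeries CoefRing}

theorem T'_mul_eq_X (h : IsXY s x y) (hT' : toL T' * (y + CL μ1 * x + CL μ3) = x) :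
    T' * (C μ1 * X + C μ3 * X * s - 1) = X := by
  apply HahnSeries.ofPowerSeries_injective (Γ := ℤ)
  simp only [map_mul, map_add, map_sub, map_one, toL_X, toL_C]
  linear_combination (tL * toL s) * hT' - toL T' * toL s * h.hy
    - toL T' * (CL μ1 * tL - 1) * h.hx + tL * h.hx

theorem X_mul_T'_mul_cubicFactor (h : IsXY s x y)
    (hT' : toL T' * (y + CL μ1 * x + CL μ3) = x) : X * T' * cubicFactor s = -s := by
  apply X_mul_cancel
  linear_combination (-s) * h.T'_mul_eq_X hT' - T' * h.seq.eq_cubicFactor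

end IsXY

end

open PowerSeries in
/-- `q(t) = -x⟨t⟩·t·t'` is a power series in `1 + t·ℤ[μ⃗][[t]]`, with
`q = 1 - μ₂t² - μ₁μ₂t³ - (μ₁²μ₂+μ₄)t⁴ - (μ₁³μ₂+2μ₁μ₄+μ₂μ₃)t⁵ - ⋯`; in
particular the coefficient of `t` vanishes. -/
theorem statement13 (s : PowerSeries CoefRing) (x y : LaurentSeries CoefRing)
    (h : IsXY s x y) (T' : PowerSeries CoefRing)
    (hT' : toL T' * (y + CL μ1 * x + CL μ3) = x) :
    ∃ q : PowerSeries CoefRing,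
      toL q = -(x * tL * toL T') ∧
      constantCoeff q = 1 ∧
      coeff 1 q = 0 ∧
      coeff 2 q = -μ2 ∧
      coeff 3 q = -(μ1 * μ2) ∧
      coeff 4 q = -(μ1 ^ 2 * μ2 + μ4) ∧
      coeff 5 q = -(μ1 ^ 3 * μ2 + 2 * μ1 * μ4 + μ2 * μ3) := by
  obtain ⟨w0, w1, w2, w3, w4, w5⟩ := h.seq.coeff_cubicFactor_low h.s0
  set q := invOfUnit (cubicFactor s) 1
  have hwq : cubicFactor s * q = 1 := mul_invOfUnit _ 1 (by simp [w0])
  have hXT' : X * T' = -(q * s) := by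
    linear_combination q * h.X_mul_T'_mul_cubicFactor hT' - X * T' * hwq
  have hq : toL q = -(x * tL * toL T') := by
    have htT' := congrArg toL hXT'
    simp only [map_mul, map_neg, toL_X] at htT'
    linear_combination x * htT' - toL q * h.hx
  obtain ⟨q0, q1, q2, q3, q4, q5⟩ := coeff_low_of_mul_eq_one hwq w0 w1
  refine ⟨q, hq, q0, q1, by rw [q2, w2], by rw [q3, w3], ?_, ?_⟩
  · rw [q4, w2, w4]; ring
  · rw [q5, w2, w3, w5]; ring
end
end
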